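/- arXiv:2210.01804 — 2 statements merged into one kernel-verified Lean document; each statement's English description precedes it below -/
import Mathlib

section
/- Consider the closed-loop system $x_{k+1} = (A_k + B_k L_k) x_k + ((C_k + D_k L_k) x_k) w_{k+1}$, $x_0 = \xi$, where $L_k = -(R_k + B_k^{\intercal} P_{k+1} B_k + D_k^{\intercal} P_{k+1} D_k)^{-1}(B_k^{\intercal} P_{k+1} A_k + D_k^{\intercal} P_{k+1} C_k)$ and $(P_k)$ solves the Riccati difference equation with $P_N = Q_N$, under $Q_k, Q_N \geq 0$, $R_k > 0$, and $(w_{k+1})$ a martingale difference sequence with conditional variance $1$. Then $\mathbf{E}[x_k^{\intercal} P_k x_k]$ satisfies the identity $\mathbf{E}[x_k^{\intercal} P_k x_k] = \mathbf{E}[x_k^{\intercal} Q_k x_k + (L_k x_k)^{\intercal} R_k (L_k x_k)] + \mathbf{E}[x_{k+1}^{\intercal} P_{k+1} x_{k+1}]$ for each $k = 0, \ldots, N-1$, and consequently $\xi^{\intercal} P_0 \xi = \mathbf{E}[x_N^{\intercal} Q_N x_N] + \sum_{k=0}^{N-1} \mathbf{E}[x_k^{\intercal} Q_k x_k + (L_k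 x_k)^{\intercal} R_k (L_k x_k)]$, i.e., the closed-loop cost equals $\xi^{\intercal} P_0 \xi$. -/
/-!
Write `S = R + BᵀP'B + DᵀP'D` and `L = -S⁻¹(BᵀP'A + DᵀP'C)`. Completing the square turns the
Riccati recursion into the closed-loop Lyapunov form
`P = Q + LᵀRL + (A + BL)ᵀP'(A + BL) + (C + DL)ᵀP'(C + DL)`, which also shows by backward
induction that every `P_k` is positive semidefinite, so `S` is invertible. For the closed-loop
state `y = Mv + w • Nv` with `v` known at time `k`, the cross term of `E[yᵀP'y]` carries one
factor of `w` and vanishes since `E[w | F_k] = 0`, while the square of the noise term has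
expectation `E[(Nv)ᵀP'(Nv)]` since `E[w² | F_k] = 1`. This gives the per-step identity, and
summing it telescopes to `ξᵀP₀ξ`.
-/

open Matrix MeasureTheory

namespace Matrix

variable {α ι κ : Type*} [CommRing α] [Fintype ι] [Fintype κ]

noncomputable def lqrGain [DecidableEq κ] (A C P : Matrix ι ι α) (B D : Matrix ι κ α)
    (R : Matrix κ κ α) : Matrix κ ι α :=
  -((R + Bᵀ * P * B + Dᵀ * P * D)⁻¹ * (Bᵀ * P * A + Dᵀ * P * C))

noncomputable def riccatiStep [DecidableEq κ] (A C Q P : Matrix ι ι α) (B D : Matrix ι κ α)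
    (R : Matrix κ κ α) : Matrix ι ι α :=
  Q + Aᵀ * P * A + Cᵀ * P * C - (Aᵀ * P * B + Cᵀ * P * D) *
    (R + Bᵀ * P * B + Dᵀ * P * D)⁻¹ * (Bᵀ * P * A + Dᵀ * P * C)

theorem completion_of_squares {A C P : Matrix ι ι α} {B D : Matrix ι κ α} {R : Matrix κ κ α}
    {L : Matrix κ ι α}
    (hL : (R + Bᵀ * P * B + Dᵀ * P * D) * L = -(Bᵀ * P * A + Dᵀ * P * C)) :
    Lᵀ * R * L + (A + B * L)ᵀ * P * (A + B * L) + (C + D * L)ᵀ * P * (C + D * L)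
      = Aᵀ * P * A + Cᵀ * P * C + (Aᵀ * P * B + Cᵀ * P * D) * L := by
  calc _ = Aᵀ * P * A + Cᵀ * P * C + (Aᵀ * P * B + Cᵀ * P * D) * L
        + Lᵀ * ((R + Bᵀ * P * B + Dᵀ * P * D) * L + (Bᵀ * P * A + Dᵀ * P * C)) := by
        simp only [transpose_add, transpose_mul, Matrix.add_mul, Matrix.mul_add, Matrix.mul_assoc]
        abel
    _ = _ := by rw [hL, neg_add_cancel, Matrix.mul_zero, add_zero]

theorem riccatiStep_eq_closedLoop [DecidableEq κ] {A C Q P : Matrix ι ι α}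
    {B D : Matrix ι κ α} {R : Matrix κ κ α} {L : Matrix κ ι α}
    (hS : IsUnit (R + Bᵀ * P * B + Dᵀ * P * D).det) (hL : L = lqrGain A C P B D R) :
    riccatiStep A C Q P B D R
      = Q + Lᵀ * R * L + (A + B * L)ᵀ * P * (A + B * L) + (C + D * L)ᵀ * P * (C + D * L) := by
  have hSL : (R + Bᵀ * P * B + Dᵀ * P * D) * L = -(Bᵀ * P * A + Dᵀ * P * C) := by
    rw [hL, lqrGain, Matrix.mul_neg, ← Matrix.mul_assoc, mul_nonsing_inv _ hS, Matrix.one_mul]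
  rw [add_assoc Q, add_assoc Q, completion_of_squares hSL, riccatiStep, hL, lqrGain]
  simp only [Matrix.mul_neg, Matrix.mul_assoc, sub_eq_add_neg, add_assoc]

theorem dotProduct_transpose_mul_mul_mulVec {ν : Type*} [Fintype ν] (u : ι → α)
    (X : Matrix κ ι α) (P : Matrix κ ν α) (Y : Matrix ν ι α) :
    u ⬝ᵥ (Xᵀ * P * Y) *ᵥ u = X *ᵥ u ⬝ᵥ P *ᵥ (Y *ᵥ u) := by
  rw [← mulVec_mulVec, ← mulVec_mulVec, dotProduct_mulVec, vecMul_transpose]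

theorem posDef_add_transpose_mul_mul_add {R : Matrix κ κ ℝ} {P : Matrix ι ι ℝ} (hR : R.PosDef)
    (hP : P.PosSemidef) (B D : Matrix ι κ ℝ) : (R + Bᵀ * P * B + Dᵀ * P * D).PosDef :=
  (hR.add_posSemidef (hP.conjTranspose_mul_mul_same B)).add_posSemidef
    (hP.conjTranspose_mul_mul_same D)

theorem posSemidef_riccatiStep [DecidableEq κ] {A C Q P : Matrix ι ι ℝ}
    {B D : Matrix ι κ ℝ} {R : Matrix κ κ ℝ} (hQ : Q.PosSemidef) (hR : R.PosDef)
    (hP : P.PosSemidef) : (riccatiStep A C Q P B D R).PosSemidef := by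
  have hS := (posDef_add_transpose_mul_mul_add hR hP B D).isUnit
  rw [riccatiStep_eq_closedLoop ((isUnit_iff_isUnit_det _).mp hS) rfl]
  exact ((hQ.add (hR.posSemidef.conjTranspose_mul_mul_same _)).add
    (hP.conjTranspose_mul_mul_same _)).add (hP.conjTranspose_mul_mul_same _)

end Matrix

namespace MeasureTheory

variable {Ω : Type*} {m m0 : MeasurableSpace Ω} {μ : Measure Ω}

theorem integrable_of_condExp_ae_eq_one [IsProbabilityMeasure μ] (hm : m ≤ m0) {f : Ω → ℝ}
    (hf : μ[f | m] =ᵐ[μ] fun _ => 1) : Integrable f μ :=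
  .of_integral_ne_zero (by rw [← integral_condExp hm, integral_congr_ae hf]; simp)

theorem integral_mul_eq_integral_mul_condExp [IsFiniteMeasure μ] (hm : m ≤ m0) {f g : Ω → ℝ}
    (hf : StronglyMeasurable[m] f) (hfg : Integrable (fun ω => f ω * g ω) μ)
    (hg : Integrable g μ) : ∫ ω, f ω * g ω ∂μ = ∫ ω, f ω * μ[g | m] ω ∂μ := by
  rw [← integral_condExp hm]
  exact integral_congr_ae (condExp_mul_of_stronglyMeasurable_left hf hfg hg)

variable {ι κ : Type*} [Fintype ι] [Fintype κ]

theorem MemLp.matrix_mulVec {p : ENNReal} {f : Ω → κ → ℝ} (hf : MemLp f p μ)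
    (M : Matrix ι κ ℝ) : MemLp (fun ω => M *ᵥ f ω) p μ :=
  (LinearMap.toContinuousLinearMap (Matrix.mulVecLin M)).comp_memLp' hf

theorem MemLp.integrable_dotProduct_mulVec {f : Ω → ι → ℝ} {g : Ω → κ → ℝ}
    (M : Matrix ι κ ℝ) (hf : MemLp f 2 μ) (hg : MemLp g 2 μ) :
    Integrable (fun ω => f ω ⬝ᵥ M *ᵥ g ω) μ :=
  integrable_finsetSum _ fun i _ => (hf.eval i).integrable_mul ((hg.matrix_mulVec M).eval i)

variable [IsProbabilityMeasure μ] {w : Ω → ℝ} {v y : Ω → ι → ℝ}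

theorem integral_quadForm_of_multiplicative_noise (hm : m ≤ m0) (hw : AEStronglyMeasurable w μ)
    (hw_mean : μ[w | m] =ᵐ[μ] 0) (hw_var : μ[fun ω => w ω ^ 2 | m] =ᵐ[μ] fun _ => 1)
    (hv_meas : Measurable[m] v) (hv : MemLp v 2 μ) (hy : MemLp y 2 μ) {M N P : Matrix ι ι ℝ}
    (hdyn : ∀ᵐ ω ∂μ, y ω = M *ᵥ v ω + w ω • N *ᵥ v ω) :
    ∫ ω, y ω ⬝ᵥ P *ᵥ y ω ∂μ = ∫ ω, v ω ⬝ᵥ (Mᵀ * P * M + Nᵀ * P * N) *ᵥ v ω ∂μ := by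
  have hw_sq : Integrable (fun ω => w ω ^ 2) μ := integrable_of_condExp_ae_eq_one hm hw_var
  have hw_int : Integrable w μ := ((memLp_two_iff_integrable_sq hw).2 hw_sq).integrable one_le_two
  have hMv := hv.matrix_mulVec M
  have hNv := hv.matrix_mulVec N
  -- the noise term `w • N v = y - M v` is square integrable because `y` and `M v` are
  have hnoise : MemLp (fun ω => w ω • N *ᵥ v ω) 2 μ :=
    (hy.sub hMv).ae_eq (by filter_upwards [hdyn] with ω h; simp [h])
  set cross := fun ω => M *ᵥ v ω ⬝ᵥ P *ᵥ (N *ᵥ v ω) + N *ᵥ v ω ⬝ᵥ P *ᵥ (M *ᵥ v ω)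
  set quad := fun ω => N *ᵥ v ω ⬝ᵥ P *ᵥ (N *ᵥ v ω)
  have hcross : Integrable (fun ω => cross ω * w ω) μ :=
    ((hMv.integrable_dotProduct_mulVec P hnoise).add
      (hnoise.integrable_dotProduct_mulVec P hMv)).congr <| .of_forall fun ω => by
        simp only [cross, Pi.add_apply, mulVec_smul, dotProduct_smul, smul_dotProduct, smul_eq_mul]
        ring
  have hquad : Integrable (fun ω => quad ω * w ω ^ 2) μ :=
    (hnoise.integrable_dotProduct_mulVec P hnoise).congr <| .of_forall fun ω => by
      simp only [quad, mulVec_smul, dotProduct_smul, smul_dotProduct, smul_eq_mul]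
      ring
  have hcross_meas : StronglyMeasurable[m] cross :=
    ((by fun_prop : Continuous fun u => M *ᵥ u ⬝ᵥ P *ᵥ (N *ᵥ u) + N *ᵥ u ⬝ᵥ P *ᵥ (M *ᵥ u))
      |>.measurable.comp hv_meas).stronglyMeasurable
  have hquad_meas : StronglyMeasurable[m] quad :=
    ((by fun_prop : Continuous fun u => N *ᵥ u ⬝ᵥ P *ᵥ (N *ᵥ u))
      |>.measurable.comp hv_meas).stronglyMeasurable
  have hexpand : ∀ᵐ ω ∂μ, y ω ⬝ᵥ P *ᵥ y ω
      = M *ᵥ v ω ⬝ᵥ P *ᵥ (M *ᵥ v ω) + cross ω * w ω + quad ω * w ω ^ 2 := by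
    filter_upwards [hdyn] with ω h
    simp only [h, cross, quad, dotProduct_add, add_dotProduct, mulVec_add, mulVec_smul,
      dotProduct_smul, smul_dotProduct, smul_eq_mul]
    ring
  have hcross_zero : ∫ ω, cross ω * w ω ∂μ = 0 := by
    rw [integral_mul_eq_integral_mul_condExp hm hcross_meas hcross hw_int]
    exact integral_eq_zero_of_ae (hw_mean.mono fun ω h => by simp [h])
  have hquad_eq : ∫ ω, quad ω * w ω ^ 2 ∂μ = ∫ ω, quad ω ∂μ := by
    rw [integral_mul_eq_integral_mul_condExp hm hquad_meas hquad hw_sq]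
    exact integral_congr_ae (hw_var.mono fun ω h => by simp [h])
  have hMPM := hMv.integrable_dotProduct_mulVec P hMv
  rw [integral_congr_ae hexpand, integral_add (hMPM.fun_add hcross) hquad,
    integral_add hMPM hcross, hcross_zero, hquad_eq, add_zero,
    ← integral_add hMPM (hNv.integrable_dotProduct_mulVec P hNv)]
  simp only [add_mulVec, dotProduct_add, dotProduct_transpose_mul_mul_mulVec]

theorem integral_quadForm_eq_stageCost_add_next (hm : m ≤ m0)
    (hw : AEStronglyMeasurable w μ) (hw_mean : μ[w | m] =ᵐ[μ] 0)
    (hw_var : μ[fun ω => w ω ^ 2 | m] =ᵐ[μ] fun _ => 1)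
    (hv_meas : Measurable[m] v) (hv : MemLp v 2 μ) (hy : MemLp y 2 μ)
    {Q P' M N : Matrix ι ι ℝ} {R : Matrix κ κ ℝ} {L : Matrix κ ι ℝ}
    (hdyn : ∀ᵐ ω ∂μ, y ω = M *ᵥ v ω + w ω • N *ᵥ v ω) :
    ∫ ω, v ω ⬝ᵥ (Q + Lᵀ * R * L + Mᵀ * P' * M + Nᵀ * P' * N) *ᵥ v ω ∂μ
      = ∫ ω, (v ω ⬝ᵥ Q *ᵥ v ω + L *ᵥ v ω ⬝ᵥ R *ᵥ (L *ᵥ v ω)) ∂μ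
        + ∫ ω, y ω ⬝ᵥ P' *ᵥ y ω ∂μ := by
  rw [integral_quadForm_of_multiplicative_noise hm hw hw_mean hw_var hv_meas hv hy hdyn,
    ← integral_add ((hv.integrable_dotProduct_mulVec Q hv).fun_add
      ((hv.matrix_mulVec L).integrable_dotProduct_mulVec R (hv.matrix_mulVec L)))
      (hv.integrable_dotProduct_mulVec _ hv)]
  simp only [add_mulVec, dotProduct_add, dotProduct_transpose_mul_mul_mulVec, add_assoc]

end MeasureTheory

theorem stmt_15_general {Ω : Type*} [m0 : MeasurableSpace Ω] (μ : Measure Ω) [IsProbabilityMeasure μ]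
    {n r N : ℕ} (F : ℕ → MeasurableSpace Ω) (hFle : ∀ k, F k ≤ m0)
    (A C Q : ℕ → Matrix (Fin n) (Fin n) ℝ)
    (B D : ℕ → Matrix (Fin n) (Fin r) ℝ) (R : ℕ → Matrix (Fin r) (Fin r) ℝ)
    (hQ : ∀ k, (Q k).PosSemidef) (hR : ∀ k, (R k).PosDef)
    (w : ℕ → Ω → ℝ)
    (hwmeas : ∀ k, Measurable[F (k + 1)] (w (k + 1)))
    (hw0 : ∀ k, μ[w (k + 1) | F k] =ᵐ[μ] 0)
    (hw2 : ∀ k, μ[fun ω => (w (k + 1) ω) ^ 2 | F k] =ᵐ[μ] fun _ => (1 : ℝ))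
    (P : ℕ → Matrix (Fin n) (Fin n) ℝ)
    (hPN : P N = Q N)
    (hP : ∀ k < N, P k = Q k + (A k)ᵀ * P (k+1) * A k + (C k)ᵀ * P (k+1) * C k -
      ((A k)ᵀ * P (k+1) * B k + (C k)ᵀ * P (k+1) * D k) *
        (R k + (B k)ᵀ * P (k+1) * B k + (D k)ᵀ * P (k+1) * D k)⁻¹ *
        ((B k)ᵀ * P (k+1) * A k + (D k)ᵀ * P (k+1) * C k))
    (L : ℕ → Matrix (Fin r) (Fin n) ℝ)
    (hL : ∀ k < N, L k = -((R k + (B k)ᵀ * P (k+1) * B k + (D k)ᵀ * P (k+1) * D k)⁻¹ *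
        ((B k)ᵀ * P (k+1) * A k + (D k)ᵀ * P (k+1) * C k)))
    (ξ : Fin n → ℝ)
    (x : ℕ → Ω → Fin n → ℝ)
    (hxmeas : ∀ k, Measurable[F k] (x k)) (hx2 : ∀ k, MemLp (x k) 2 μ)
    (hx0 : ∀ ω, x 0 ω = ξ)
    (hdyn : ∀ k < N, ∀ᵐ ω ∂μ,
      x (k+1) ω = (A k + B k * L k).mulVec (x k ω)
        + w (k+1) ω • ((C k + D k * L k).mulVec (x k ω))) :
    (∀ k < N,
      ∫ ω, x k ω ⬝ᵥ (P k).mulVec (x k ω) ∂μ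
        = (∫ ω, (x k ω ⬝ᵥ (Q k).mulVec (x k ω)
            + (L k).mulVec (x k ω) ⬝ᵥ (R k).mulVec ((L k).mulVec (x k ω))) ∂μ)
          + ∫ ω, x (k+1) ω ⬝ᵥ (P (k+1)).mulVec (x (k+1) ω) ∂μ) ∧
    ξ ⬝ᵥ (P 0).mulVec ξ
      = (∫ ω, x N ω ⬝ᵥ (Q N).mulVec (x N ω) ∂μ)
        + ∑ k ∈ Finset.range N,
            ∫ ω, (x k ω ⬝ᵥ (Q k).mulVec (x k ω)
              + (L k).mulVec (x k ω) ⬝ᵥ (R k).mulVec ((L k).mulVec (x k ω))) ∂μ := by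
  have hPsd : ∀ k ≤ N, (P k).PosSemidef := fun k hk =>
    Nat.decreasingInduction
      (fun j hj ih => (hP j hj).symm ▸ posSemidef_riccatiStep (hQ j) (hR j) ih) (hPN ▸ hQ N) hk
  have hstep : ∀ k < N,
      ∫ ω, x k ω ⬝ᵥ (P k).mulVec (x k ω) ∂μ
        = (∫ ω, (x k ω ⬝ᵥ (Q k).mulVec (x k ω)
            + (L k).mulVec (x k ω) ⬝ᵥ (R k).mulVec ((L k).mulVec (x k ω))) ∂μ)
          + ∫ ω, x (k+1) ω ⬝ᵥ (P (k+1)).mulVec (x (k+1) ω) ∂μ := by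
    intro k hk
    have hS := (posDef_add_transpose_mul_mul_add (hR k) (hPsd (k + 1) hk) (B k) (D k)).isUnit
    have hPk : P k = riccatiStep (A k) (C k) (Q k) (P (k + 1)) (B k) (D k) (R k) := hP k hk
    rw [hPk, riccatiStep_eq_closedLoop ((isUnit_iff_isUnit_det _).mp hS) (hL k hk)]
    exact integral_quadForm_eq_stageCost_add_next (hFle k)
      ((hwmeas k).mono (hFle (k + 1)) le_rfl).aestronglyMeasurable (hw0 k) (hw2 k)
      (hxmeas k) (hx2 k) (hx2 (k + 1)) (hdyn k hk)
  refine ⟨hstep, ?_⟩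
  rw [Finset.sum_congr rfl fun k hk => eq_sub_of_add_eq (hstep k (Finset.mem_range.1 hk)).symm,
    Finset.sum_range_sub', hPN]
  simp [hx0]

/-- Along the closed-loop system with the optimal feedback gains `L_k`, the
quantity `E[x_kᵀ P_k x_k]` satisfies the per-step identity, and consequently the closed-loop
cost equals `ξᵀ P₀ ξ`. -/
theorem stmt_15 {Ω : Type*} [m0 : MeasurableSpace Ω] (μ : Measure Ω) [IsProbabilityMeasure μ]
    {n r N : ℕ} (F : ℕ → MeasurableSpace Ω) (hFle : ∀ k, F k ≤ m0)
    (hFmono : ∀ k, F k ≤ F (k + 1))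
    (A C Q : ℕ → Matrix (Fin n) (Fin n) ℝ)
    (B D : ℕ → Matrix (Fin n) (Fin r) ℝ) (R : ℕ → Matrix (Fin r) (Fin r) ℝ)
    (hQ : ∀ k, (Q k).PosSemidef) (hQN : (Q N).PosSemidef) (hR : ∀ k, (R k).PosDef)
    (w : ℕ → Ω → ℝ)
    (hwmeas : ∀ k, Measurable[F (k + 1)] (w (k + 1)))
    (hw0 : ∀ k, μ[w (k + 1) | F k] =ᵐ[μ] 0)
    (hw2 : ∀ k, μ[fun ω => (w (k + 1) ω) ^ 2 | F k] =ᵐ[μ] fun _ => (1 : ℝ))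
    (P : ℕ → Matrix (Fin n) (Fin n) ℝ)
    (hPN : P N = Q N)
    (hP : ∀ k < N, P k = Q k + (A k)ᵀ * P (k+1) * A k + (C k)ᵀ * P (k+1) * C k -
      ((A k)ᵀ * P (k+1) * B k + (C k)ᵀ * P (k+1) * D k) *
        (R k + (B k)ᵀ * P (k+1) * B k + (D k)ᵀ * P (k+1) * D k)⁻¹ *
        ((B k)ᵀ * P (k+1) * A k + (D k)ᵀ * P (k+1) * C k))
    (L : ℕ → Matrix (Fin r) (Fin n) ℝ)
    (hL : ∀ k < N, L k = -((R k + (B k)ᵀ * P (k+1) * B k + (D k)ᵀ * P (k+1) * D k)⁻¹ *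
        ((B k)ᵀ * P (k+1) * A k + (D k)ᵀ * P (k+1) * C k)))
    (ξ : Fin n → ℝ)
    (x : ℕ → Ω → Fin n → ℝ)
    (hxmeas : ∀ k, Measurable[F k] (x k)) (hx2 : ∀ k, MemLp (x k) 2 μ)
    (hx0 : ∀ ω, x 0 ω = ξ)
    (hdyn : ∀ k < N, ∀ᵐ ω ∂μ,
      x (k+1) ω = (A k + B k * L k).mulVec (x k ω)
        + w (k+1) ω • ((C k + D k * L k).mulVec (x k ω))) :
    (∀ k < N,
      ∫ ω, x k ω ⬝ᵥ (P k).mulVec (x k ω) ∂μ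
        = (∫ ω, (x k ω ⬝ᵥ (Q k).mulVec (x k ω)
            + (L k).mulVec (x k ω) ⬝ᵥ (R k).mulVec ((L k).mulVec (x k ω))) ∂μ)
          + ∫ ω, x (k+1) ω ⬝ᵥ (P (k+1)).mulVec (x (k+1) ω) ∂μ) ∧
    ξ ⬝ᵥ (P 0).mulVec ξ
      = (∫ ω, x N ω ⬝ᵥ (Q N).mulVec (x N ω) ∂μ)
        + ∑ k ∈ Finset.range N,
            ∫ ω, (x k ω ⬝ᵥ (Q k).mulVec (x k ω)
              + (L k).mulVec (x k ω) ⬝ᵥ (R k).mulVec ((L k).mulVec (x k ω))) ∂μ :=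
  stmt_15_general (m0 := m0) μ F hFle A C Q B D R hQ hR w hwmeas hw0 hw2 P hPN hP L hL ξ x hxmeas
    hx2 hx0 hdyn
end

section
/- (Uniqueness of the optimal control) In the discrete stochastic LQ problem $x_{k+1} = A_k x_k + B_k u_k + (C_k x_k + D_k u_k) w_{k+1}$ with cost $J(u) = \mathbf{E}[x_N^{\intercal} Q_N x_N] + \mathbf{E}\sum_{k=0}^{N-1}(x_k^{\intercal} Q_k x_k + u_k^{\intercal} R_k u_k)$, $Q_k, Q_N \geq 0$, $R_k > 0$, any two optimal controls coincide almost surely: if $J(u) = J(v) = \inf_{\tilde u} J(\tilde u)$, then $u_k = v_k$ a.s. for every $k = 0, \ldots, N-1$. -/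
open Matrix MeasureTheory

/-!
The state equation is affine in the pair (control, state), so the midpoint of two admissible
pairs is admissible. The cost is a sum of integrated quadratic forms and
hence obeys the parallelogram identity
`J(u, x) + J(v, y) = 2 J((u + v)/2, (x + y)/2) + J(u - v, x - y) / 2`.
If both pairs are optimal, the left side is `2 inf J ≤ 2 J(midpoint)`, so `J(u - v, x - y) ≤ 0`;
as every term of that cost is nonnegative, each `E[(u_k - v_k)ᵀ R_k (u_k - v_k)]` vanishes, and
`R_k > 0` forces `u_k = v_k` a.s. No Riccati equation is needed.
-/

section QuadraticIntegrals

variable {Ω ι κ : Type*} [MeasurableSpace Ω] {μ : Measure Ω} [Fintype ι] [Fintype κ]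

theorem MeasureTheory.MemLp.integrable_dotProduct_mulVec_s16 (M : Matrix ι κ ℝ) {f : Ω → ι → ℝ}
    {g : Ω → κ → ℝ} (hf : MemLp f 2 μ) (hg : MemLp g 2 μ) :
    Integrable (fun ω => f ω ⬝ᵥ M *ᵥ g ω) μ := by
  have hMg : MemLp (fun ω => M *ᵥ g ω) 2 μ :=
    (LinearMap.toContinuousLinearMap M.mulVecLin).comp_memLp' hg
  exact integrable_finsetSum _ fun i _ => (hf.eval i).integrable_mul (hMg.eval i)

theorem dotProduct_mulVec_parallelogram (M : Matrix ι ι ℝ) (a b : ι → ℝ) :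
    a ⬝ᵥ M *ᵥ a + b ⬝ᵥ M *ᵥ b =
      2 * ((2⁻¹ : ℝ) • (a + b) ⬝ᵥ M *ᵥ ((2⁻¹ : ℝ) • (a + b))) +
        2⁻¹ * ((a - b) ⬝ᵥ M *ᵥ (a - b)) := by
  simp only [mulVec_add, mulVec_smul, mulVec_sub, dotProduct_add, add_dotProduct,
    dotProduct_sub, sub_dotProduct, dotProduct_smul, smul_dotProduct, smul_eq_mul]
  ring

theorem integral_parallelogram_of_forall {a b c d : Ω → ℝ} (ha : Integrable a μ)
    (hb : Integrable b μ) (hc : Integrable c μ) (hd : Integrable d μ)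
    (h : ∀ ω, a ω + b ω = 2 * c ω + 2⁻¹ * d ω) :
    ∫ ω, a ω ∂μ + ∫ ω, b ω ∂μ = 2 * ∫ ω, c ω ∂μ + 2⁻¹ * ∫ ω, d ω ∂μ := by
  rw [← integral_add ha hb, ← integral_const_mul, ← integral_const_mul,
    ← integral_add (hc.const_mul 2) (hd.const_mul 2⁻¹)]
  exact integral_congr_ae (.of_forall h)

theorem ae_eq_zero_of_integral_dotProduct_mulVec_nonpos {M : Matrix κ κ ℝ} (hM : M.PosDef)
    {f : Ω → κ → ℝ} (hf : MemLp f 2 μ) (h : ∫ ω, f ω ⬝ᵥ M *ᵥ f ω ∂μ ≤ 0) : f =ᵐ[μ] 0 := by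
  have hnonneg : 0 ≤ fun ω => f ω ⬝ᵥ M *ᵥ f ω := fun ω => by
    simpa using hM.posSemidef.dotProduct_mulVec_nonneg (f ω)
  have hzero : (fun ω => f ω ⬝ᵥ M *ᵥ f ω) =ᵐ[μ] 0 :=
    (integral_eq_zero_iff_of_nonneg hnonneg (hf.integrable_dotProduct_mulVec_s16 M hf)).mp
      (h.antisymm (integral_nonneg hnonneg))
  filter_upwards [hzero] with ω hω
  by_contra hne
  simpa [hω] using hM.dotProduct_mulVec_pos hne

end QuadraticIntegrals

section LinearQuadratic

variable {Ω ι κ : Type*} [MeasurableSpace Ω] [Fintype ι] [Fintype κ]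

def IsLQAdmissible (μ : Measure Ω) (F : ℕ → MeasurableSpace Ω) (N : ℕ)
    (A C : ℕ → Matrix ι ι ℝ) (B D : ℕ → Matrix ι κ ℝ) (w : ℕ → Ω → ℝ) (ξ : ι → ℝ)
    (u : ℕ → Ω → κ → ℝ) (x : ℕ → Ω → ι → ℝ) : Prop :=
  (∀ k, Measurable[F k] (u k)) ∧ (∀ k, MemLp (u k) 2 μ) ∧
    (∀ k, Measurable[F k] (x k)) ∧ (∀ k, MemLp (x k) 2 μ) ∧ (∀ ω, x 0 ω = ξ) ∧
    ∀ k < N, ∀ᵐ ω ∂μ, x (k + 1) ω = A k *ᵥ x k ω + B k *ᵥ u k ω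
      + w (k + 1) ω • (C k *ᵥ x k ω + D k *ᵥ u k ω)

noncomputable def lqCost (μ : Measure Ω) (Q : ℕ → Matrix ι ι ℝ) (R : ℕ → Matrix κ κ ℝ) (N : ℕ)
    (u : ℕ → Ω → κ → ℝ) (x : ℕ → Ω → ι → ℝ) : ℝ :=
  (∫ ω, x N ω ⬝ᵥ Q N *ᵥ x N ω ∂μ) +
    ∑ k ∈ Finset.range N, ∫ ω, (x k ω ⬝ᵥ Q k *ᵥ x k ω + u k ω ⬝ᵥ R k *ᵥ u k ω) ∂μ

variable {μ : Measure Ω} {N : ℕ} {u v : ℕ → Ω → κ → ℝ} {x y : ℕ → Ω → ι → ℝ}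

theorem IsLQAdmissible.midpoint {F : ℕ → MeasurableSpace Ω} {A C : ℕ → Matrix ι ι ℝ}
    {B D : ℕ → Matrix ι κ ℝ} {w : ℕ → Ω → ℝ} {ξ : ι → ℝ}
    (hu : IsLQAdmissible μ F N A C B D w ξ u x) (hv : IsLQAdmissible μ F N A C B D w ξ v y) :
    IsLQAdmissible μ F N A C B D w ξ ((2⁻¹ : ℝ) • (u + v)) ((2⁻¹ : ℝ) • (x + y)) := by
  obtain ⟨hum, huL2, hxm, hxL2, hx0, hxdyn⟩ := hu
  obtain ⟨hvm, hvL2, hym, hyL2, hy0, hydyn⟩ := hv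
  refine ⟨fun k => ?_, fun k => ?_, fun k => ?_, fun k => ?_, fun ω => ?_, fun k hk => ?_⟩
  · exact ((hum k).add (hvm k)).const_smul (2⁻¹ : ℝ)
  · exact ((huL2 k).add (hvL2 k)).const_smul (2⁻¹ : ℝ)
  · exact ((hxm k).add (hym k)).const_smul (2⁻¹ : ℝ)
  · exact ((hxL2 k).add (hyL2 k)).const_smul (2⁻¹ : ℝ)
  · simp only [Pi.smul_apply, Pi.add_apply, hx0, hy0, ← two_smul ℝ ξ, smul_smul]
    norm_num
  · filter_upwards [hxdyn k hk, hydyn k hk] with ω hx hy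
    simp only [Pi.smul_apply, Pi.add_apply, hx, hy, mulVec_add, mulVec_smul, smul_add]
    module

theorem lqCost_parallelogram {Q : ℕ → Matrix ι ι ℝ} {R : ℕ → Matrix κ κ ℝ}
    (hu : ∀ k, MemLp (u k) 2 μ) (hv : ∀ k, MemLp (v k) 2 μ)
    (hx : ∀ k, MemLp (x k) 2 μ) (hy : ∀ k, MemLp (y k) 2 μ) :
    lqCost μ Q R N u x + lqCost μ Q R N v y =
      2 * lqCost μ Q R N ((2⁻¹ : ℝ) • (u + v)) ((2⁻¹ : ℝ) • (x + y)) +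
        2⁻¹ * lqCost μ Q R N (u - v) (x - y) := by
  have hxy (k : ℕ) : MemLp (((2⁻¹ : ℝ) • (x + y)) k) 2 μ :=
    ((hx k).add (hy k)).const_smul (2⁻¹ : ℝ)
  have huv (k : ℕ) : MemLp (((2⁻¹ : ℝ) • (u + v)) k) 2 μ :=
    ((hu k).add (hv k)).const_smul (2⁻¹ : ℝ)
  have hx_y (k : ℕ) : MemLp ((x - y) k) 2 μ := (hx k).sub (hy k)
  have hu_v (k : ℕ) : MemLp ((u - v) k) 2 μ := (hu k).sub (hv k)
  have hterminal := integral_parallelogram_of_forall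
    ((hx N).integrable_dotProduct_mulVec_s16 (Q N) (hx N))
    ((hy N).integrable_dotProduct_mulVec_s16 (Q N) (hy N))
    ((hxy N).integrable_dotProduct_mulVec_s16 (Q N) (hxy N))
    ((hx_y N).integrable_dotProduct_mulVec_s16 (Q N) (hx_y N))
    fun ω => dotProduct_mulVec_parallelogram (Q N) (x N ω) (y N ω)
  have hstage (k : ℕ) := integral_parallelogram_of_forall
    (((hx k).integrable_dotProduct_mulVec_s16 (Q k) (hx k)).add
      ((hu k).integrable_dotProduct_mulVec_s16 (R k) (hu k)))
    (((hy k).integrable_dotProduct_mulVec_s16 (Q k) (hy k)).add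
      ((hv k).integrable_dotProduct_mulVec_s16 (R k) (hv k)))
    (((hxy k).integrable_dotProduct_mulVec_s16 (Q k) (hxy k)).add
      ((huv k).integrable_dotProduct_mulVec_s16 (R k) (huv k)))
    (((hx_y k).integrable_dotProduct_mulVec_s16 (Q k) (hx_y k)).add
      ((hu_v k).integrable_dotProduct_mulVec_s16 (R k) (hu_v k)))
    fun ω => by
      simp only [Pi.add_apply, Pi.sub_apply, Pi.smul_apply]
      linear_combination dotProduct_mulVec_parallelogram (Q k) (x k ω) (y k ω) +
        dotProduct_mulVec_parallelogram (R k) (u k ω) (v k ω)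
  have hsum := Finset.sum_congr rfl fun k (_ : k ∈ Finset.range N) => hstage k
  simp only [Finset.sum_add_distrib, ← Finset.mul_sum] at hsum
  unfold lqCost
  linear_combination hterminal + hsum

theorem integral_dotProduct_mulVec_le_lqCost {Q : ℕ → Matrix ι ι ℝ} {R : ℕ → Matrix κ κ ℝ}
    (hQ : ∀ k, (Q k).PosSemidef) (hR : ∀ k, (R k).PosSemidef)
    (hu : ∀ k, MemLp (u k) 2 μ) (hx : ∀ k, MemLp (x k) 2 μ) {k : ℕ} (hk : k < N) :
    ∫ ω, u k ω ⬝ᵥ R k *ᵥ u k ω ∂μ ≤ lqCost μ Q R N u x := by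
  have hQx (j : ℕ) : 0 ≤ ∫ ω, x j ω ⬝ᵥ Q j *ᵥ x j ω ∂μ :=
    integral_nonneg fun ω => by simpa using (hQ j).dotProduct_mulVec_nonneg (x j ω)
  have hRu (j : ℕ) : 0 ≤ ∫ ω, u j ω ⬝ᵥ R j *ᵥ u j ω ∂μ :=
    integral_nonneg fun ω => by simpa using (hR j).dotProduct_mulVec_nonneg (u j ω)
  have hstage (j : ℕ) : ∫ ω, (x j ω ⬝ᵥ Q j *ᵥ x j ω + u j ω ⬝ᵥ R j *ᵥ u j ω) ∂μ =
      (∫ ω, x j ω ⬝ᵥ Q j *ᵥ x j ω ∂μ) + ∫ ω, u j ω ⬝ᵥ R j *ᵥ u j ω ∂μ :=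
    integral_add ((hx j).integrable_dotProduct_mulVec_s16 _ (hx j))
      ((hu j).integrable_dotProduct_mulVec_s16 _ (hu j))
  have hsingle := Finset.single_le_sum (f := fun j =>
      ∫ ω, (x j ω ⬝ᵥ Q j *ᵥ x j ω + u j ω ⬝ᵥ R j *ᵥ u j ω) ∂μ)
    (fun j _ => by rw [hstage j]; exact add_nonneg (hQx j) (hRu j)) (Finset.mem_range.mpr hk)
  unfold lqCost
  linarith [hstage k, hQx k, hQx N]

end LinearQuadratic

theorem stmt_16_general {Ω : Type*} [m0 : MeasurableSpace Ω] (μ : Measure Ω)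
    {n r N : ℕ} (F : ℕ → MeasurableSpace Ω)
    (A C Q : ℕ → Matrix (Fin n) (Fin n) ℝ)
    (B D : ℕ → Matrix (Fin n) (Fin r) ℝ) (R : ℕ → Matrix (Fin r) (Fin r) ℝ)
    (hQ : ∀ k, (Q k).PosSemidef) (hR : ∀ k, (R k).PosDef)
    (w : ℕ → Ω → ℝ)
    (ξ : Fin n → ℝ)
    -- admissibility predicate for control/state pairs
    (Adm : (ℕ → Ω → Fin r → ℝ) → (ℕ → Ω → Fin n → ℝ) → Prop)
    (hAdm : ∀ u x, Adm u x ↔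
      ((∀ k, Measurable[F k] (u k)) ∧ (∀ k, MemLp (u k) 2 μ) ∧
       (∀ k, Measurable[F k] (x k)) ∧ (∀ k, MemLp (x k) 2 μ) ∧
       (∀ ω, x 0 ω = ξ) ∧
       (∀ k < N, ∀ᵐ ω ∂μ,
          x (k+1) ω = (A k).mulVec (x k ω) + (B k).mulVec (u k ω)
            + w (k+1) ω • ((C k).mulVec (x k ω) + (D k).mulVec (u k ω)))))
    -- cost functional
    (J : (ℕ → Ω → Fin r → ℝ) → (ℕ → Ω → Fin n → ℝ) → ℝ)
    (hJ : ∀ u x, J u x = (∫ ω, x N ω ⬝ᵥ (Q N).mulVec (x N ω) ∂μ)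
        + ∑ k ∈ Finset.range N,
            ∫ ω, (x k ω ⬝ᵥ (Q k).mulVec (x k ω) + u k ω ⬝ᵥ (R k).mulVec (u k ω)) ∂μ)
    (u : ℕ → Ω → Fin r → ℝ) (x : ℕ → Ω → Fin n → ℝ)
    (v : ℕ → Ω → Fin r → ℝ) (y : ℕ → Ω → Fin n → ℝ)
    (hu : Adm u x) (hv : Adm v y)
    (huopt : ∀ u' x', Adm u' x' → J u x ≤ J u' x')
    (hvopt : ∀ u' x', Adm u' x' → J v y ≤ J u' x') :
    ∀ k < N, u k =ᵐ[μ] v k := by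
  obtain rfl : Adm = IsLQAdmissible μ F N A C B D w ξ := funext₂ fun u x => propext (hAdm u x)
  obtain rfl : J = lqCost μ Q R N := funext₂ hJ
  have ⟨_, huL2, _, hxL2, _⟩ := hu
  have ⟨_, hvL2, _, hyL2, _⟩ := hv
  have hcost_diff : lqCost μ Q R N (u - v) (x - y) ≤ 0 := by
    have hequal := le_antisymm (huopt v y hv) (hvopt u x hu)
    have hmid := huopt _ _ (hu.midpoint hv)
    linarith [lqCost_parallelogram (Q := Q) (R := R) (N := N) huL2 hvL2 hxL2 hyL2]
  intro k hk
  have hRdiff := integral_dotProduct_mulVec_le_lqCost hQ (fun k => (hR k).posSemidef)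
    (fun k => (huL2 k).sub (hvL2 k)) (fun k => (hxL2 k).sub (hyL2 k)) hk
  exact Filter.eventuallyEq_iff_sub.mpr
    (ae_eq_zero_of_integral_dotProduct_mulVec_nonpos (hR k) ((huL2 k).sub (hvL2 k))
      (hRdiff.trans hcost_diff))

/-- Uniqueness of the optimal control in the discrete stochastic LQ problem:
any two optimal admissible controls coincide almost surely at every step. -/
theorem stmt_16 {Ω : Type*} [m0 : MeasurableSpace Ω] (μ : Measure Ω) [IsProbabilityMeasure μ]
    {n r N : ℕ} (F : ℕ → MeasurableSpace Ω) (hFle : ∀ k, F k ≤ m0)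
    (hFmono : ∀ k, F k ≤ F (k + 1))
    (A C Q : ℕ → Matrix (Fin n) (Fin n) ℝ)
    (B D : ℕ → Matrix (Fin n) (Fin r) ℝ) (R : ℕ → Matrix (Fin r) (Fin r) ℝ)
    (hQ : ∀ k, (Q k).PosSemidef) (hQN : (Q N).PosSemidef) (hR : ∀ k, (R k).PosDef)
    (w : ℕ → Ω → ℝ)
    (hwmeas : ∀ k, Measurable[F (k + 1)] (w (k + 1)))
    (hw0 : ∀ k, μ[w (k + 1) | F k] =ᵐ[μ] 0)
    (hw2 : ∀ k, μ[fun ω => (w (k + 1) ω) ^ 2 | F k] =ᵐ[μ] fun _ => (1 : ℝ))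
    (ξ : Fin n → ℝ)
    -- admissibility predicate for control/state pairs
    (Adm : (ℕ → Ω → Fin r → ℝ) → (ℕ → Ω → Fin n → ℝ) → Prop)
    (hAdm : ∀ u x, Adm u x ↔
      ((∀ k, Measurable[F k] (u k)) ∧ (∀ k, MemLp (u k) 2 μ) ∧
       (∀ k, Measurable[F k] (x k)) ∧ (∀ k, MemLp (x k) 2 μ) ∧
       (∀ ω, x 0 ω = ξ) ∧
       (∀ k < N, ∀ᵐ ω ∂μ,
          x (k+1) ω = (A k).mulVec (x k ω) + (B k).mulVec (u k ω)
            + w (k+1) ω • ((C k).mulVec (x k ω) + (D k).mulVec (u k ω)))))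
    -- cost functional
    (J : (ℕ → Ω → Fin r → ℝ) → (ℕ → Ω → Fin n → ℝ) → ℝ)
    (hJ : ∀ u x, J u x = (∫ ω, x N ω ⬝ᵥ (Q N).mulVec (x N ω) ∂μ)
        + ∑ k ∈ Finset.range N,
            ∫ ω, (x k ω ⬝ᵥ (Q k).mulVec (x k ω) + u k ω ⬝ᵥ (R k).mulVec (u k ω)) ∂μ)
    (u : ℕ → Ω → Fin r → ℝ) (x : ℕ → Ω → Fin n → ℝ)
    (v : ℕ → Ω → Fin r → ℝ) (y : ℕ → Ω → Fin n → ℝ)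
    (hu : Adm u x) (hv : Adm v y)
    (huopt : ∀ u' x', Adm u' x' → J u x ≤ J u' x')
    (hvopt : ∀ u' x', Adm u' x' → J v y ≤ J u' x') :
    ∀ k < N, u k =ᵐ[μ] v k :=
  stmt_16_general (m0 := m0) μ F A C Q B D R hQ hR w ξ Adm hAdm J hJ u x v y hu hv huopt hvopt
end
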